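/- Let μ ∈ ℝ, σ > 0 and β ≥ 0. Then the (1,1) entry of the matrix J_β(μ,σ) = ∫₀^∞ u_{μ,σ}(x) u_{μ,σ}(x)ᵀ f_{μ,σ}(x)^{1+β} dx satisfies ∫₀^∞ u₁(x)² · f_{μ,σ}(x)^{1+β} dx = L(β,μ,σ) · (1 + β + β²σ²)/σ. -/

import Mathlib

open Real MeasureTheory Set

/-- The log-normal density with parameters `μ` and `σ`. -/
noncomputable def lognormalPdf (μ σ : ℝ) (x : ℝ) : ℝ :=
  if 0 < x then
    (1 / (x * σ * Real.sqrt (2 * Real.pi))) * Real.exp (-(Real.log x - μ) ^ 2 / (2 * σ ^ 2))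
  else 0

/-- First component of the score function of the log-normal model. -/
noncomputable def scoreU1 (μ σ : ℝ) (x : ℝ) : ℝ := (Real.log x - μ) / σ ^ 2

/-- Second component of the score function of the log-normal model. -/
noncomputable def scoreU2 (μ σ : ℝ) (x : ℝ) : ℝ := ((Real.log x - μ) ^ 2 - σ ^ 2) / σ ^ 3

/-- The common multiplicative factor `L(β, μ, σ)`. -/
noncomputable def Lfactor (β μ σ : ℝ) : ℝ :=
  Real.exp (-β * μ + β ^ 2 * σ ^ 2 / (2 * (1 + β))) /
    (σ ^ (1 + β) * (2 * Real.pi) ^ (β / 2) * (1 + β) ^ ((5 : ℝ) / 2))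

/-!
Under `x = exp y` the measure `dx` becomes `exp y dy` and `u₁` becomes `(y - μ) / σ²`.
Completing the square, `exp y · f_{μ,σ}(exp y)^{1+β}` is a constant multiple of the Gaussian
kernel with mean `m = μ - βσ²/(1+β)` and variance `v = σ²/(1+β)`, so the entry is that constant
times the second moment of this Gaussian about `μ`, namely `√(2πv) (v + (m - μ)²)`.
-/

theorem integral_Ioi_zero_eq_integral_exp_smul_comp_exp {E : Type*} [NormedAddCommGroup E]
    [NormedSpace ℝ E] (g : ℝ → E) :
    ∫ x in Ioi (0 : ℝ), g x = ∫ y, exp y • g (exp y) := by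
  rw [← Real.range_exp, ← image_univ,
    integral_image_eq_integral_abs_deriv_smul MeasurableSet.univ
      (fun y _ => (hasDerivAt_exp y).hasDerivWithinAt) exp_injective.injOn g,
    Measure.restrict_univ]
  simp_rw [abs_of_pos (exp_pos _)]

theorem integral_mul_exp_neg_mul_sq_eq_zero (b : ℝ) : ∫ x : ℝ, x * exp (-b * x ^ 2) = 0 := by
  have h := integral_neg_eq_self (fun x : ℝ => x * exp (-b * x ^ 2)) volume
  simp only [neg_sq, neg_mul, integral_neg] at h ⊢
  linarith

theorem integrable_sq_mul_exp_neg_mul_sq {b : ℝ} (hb : 0 < b) :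
    Integrable fun x : ℝ => x ^ 2 * exp (-b * x ^ 2) := by
  simpa using integrable_rpow_mul_exp_neg_mul_sq hb (s := 2) (by norm_num)

theorem integral_sq_mul_exp_neg_mul_sq {b : ℝ} (hb : 0 < b) :
    ∫ x : ℝ, x ^ 2 * exp (-b * x ^ 2) = √(π / b) / (2 * b) := by
  have hGamma : Gamma ((2 + 1) / 2) = √π / 2 := by
    rw [show ((2 : ℝ) + 1) / 2 = 1 / 2 + 1 by norm_num, Gamma_add_one (by norm_num),
      Gamma_one_half_eq]
    ring
  have hpow : b ^ (-(2 + 1) / 2 : ℝ) = (b * √b)⁻¹ := by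
    rw [sqrt_eq_rpow, ← rpow_one_add' hb.le (by norm_num), ← rpow_neg hb.le]
    norm_num
  have heven : ∫ x : ℝ, x ^ 2 * exp (-b * x ^ 2) =
      2 * ∫ x in Ioi (0 : ℝ), x ^ (2 : ℝ) * exp (-b * x ^ (2 : ℝ)) := by
    simp only [rpow_two, ← integral_comp_abs (f := fun x => x ^ 2 * exp (-b * x ^ 2)), sq_abs]
  rw [heven, integral_rpow_mul_exp_neg_mul_rpow two_pos (by norm_num) hb, hGamma, hpow,
    sqrt_div' _ hb.le]
  field_simp

theorem integral_sub_sq_mul_exp_neg_sub_sq_div {v : ℝ} (hv : 0 < v) (m c : ℝ) :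
    ∫ y : ℝ, (y - c) ^ 2 * exp (-(y - m) ^ 2 / (2 * v)) = √(2 * π * v) * (v + (m - c) ^ 2) := by
  set b := (2 * v)⁻¹ with hb_def
  have hb : 0 < b := by positivity
  have hexpand : ∀ x : ℝ, (x + m - c) ^ 2 * exp (-(x + m - m) ^ 2 / (2 * v)) =
      x ^ 2 * exp (-b * x ^ 2) + 2 * (m - c) * (x * exp (-b * x ^ 2)) +
        (m - c) ^ 2 * exp (-b * x ^ 2) := by
    intro x
    rw [add_sub_cancel_right, neg_div, div_eq_inv_mul, ← neg_mul]
    ring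
  have h₁ := integrable_sq_mul_exp_neg_mul_sq hb
  have h₂ := (integrable_mul_exp_neg_mul_sq hb).const_mul (2 * (m - c))
  have h₃ := (integrable_exp_neg_mul_sq hb).const_mul ((m - c) ^ 2)
  rw [← integral_add_right_eq_self _ m]
  simp only [hexpand]
  rw [integral_add (h₁.fun_add h₂) h₃, integral_add h₁ h₂, integral_const_mul, integral_const_mul,
    integral_sq_mul_exp_neg_mul_sq hb, integral_mul_exp_neg_mul_sq_eq_zero, integral_gaussian,
    hb_def, div_inv_eq_mul]
  field_simp
  ring

theorem lognormalPdf_exp (μ σ y : ℝ) :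
    lognormalPdf μ σ (exp y) = exp (-y - (y - μ) ^ 2 / (2 * σ ^ 2)) / (σ * √(2 * π)) := by
  rw [lognormalPdf, if_pos (exp_pos y), log_exp, neg_sub_comm, ← neg_div, exp_sub]
  field_simp

theorem exp_mul_lognormalPdf_exp_rpow (μ : ℝ) {σ β : ℝ} (hσ : 0 < σ) (hβ : 0 < 1 + β) (y : ℝ) :
    exp y * lognormalPdf μ σ (exp y) ^ (1 + β) =
      exp (-β * μ + β ^ 2 * σ ^ 2 / (2 * (1 + β))) / (σ * √(2 * π)) ^ (1 + β) *
        exp (-(y - (μ - β * σ ^ 2 / (1 + β))) ^ 2 / (2 * (σ ^ 2 / (1 + β)))) := by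
  have hexponent : y + (-y - (y - μ) ^ 2 / (2 * σ ^ 2)) * (1 + β) =
      (-β * μ + β ^ 2 * σ ^ 2 / (2 * (1 + β))) +
        -(y - (μ - β * σ ^ 2 / (1 + β))) ^ 2 / (2 * (σ ^ 2 / (1 + β))) := by
    field_simp
    ring
  rw [lognormalPdf_exp, div_rpow (exp_pos _).le (by positivity), ← exp_mul, mul_div_assoc',
    ← exp_add, hexponent, exp_add]
  ring

theorem Lfactor_eq (β μ : ℝ) {σ : ℝ} (hσ : 0 ≤ σ) :
    Lfactor β μ σ = exp (-β * μ + β ^ 2 * σ ^ 2 / (2 * (1 + β))) * √(2 * π) /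
      ((σ * √(2 * π)) ^ (1 + β) * (1 + β) ^ ((5 : ℝ) / 2)) := by
  have h2π : (0 : ℝ) < 2 * π := by positivity
  have hsqrt : √(2 * π) ^ (1 + β) = (2 * π) ^ (β / 2) * √(2 * π) := by
    rw [sqrt_eq_rpow, ← rpow_mul h2π.le, ← rpow_add h2π]
    ring_nf
  rw [Lfactor, mul_rpow hσ (sqrt_nonneg _), hsqrt]
  field_simp

/-- The `(1,1)` entry of the matrix `J_β(μ,σ)`. -/
theorem J_entry_11 (μ σ β : ℝ) (hσ : 0 < σ) (hβ : 0 ≤ β) :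
    ∫ x in Ioi (0 : ℝ), scoreU1 μ σ x ^ 2 * lognormalPdf μ σ x ^ (1 + β) =
      Lfactor β μ σ * ((1 + β + β ^ 2 * σ ^ 2) / σ) := by
  have hβ₁ : 0 < 1 + β := by linarith
  set K := exp (-β * μ + β ^ 2 * σ ^ 2 / (2 * (1 + β))) / (σ * √(2 * π)) ^ (1 + β)
  have hintegrand : ∀ y, exp y • (scoreU1 μ σ (exp y) ^ 2 * lognormalPdf μ σ (exp y) ^ (1 + β)) =
      K / σ ^ 4 * ((y - μ) ^ 2 *
        exp (-(y - (μ - β * σ ^ 2 / (1 + β))) ^ 2 / (2 * (σ ^ 2 / (1 + β))))) := by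
    intro y
    rw [smul_eq_mul, mul_left_comm, exp_mul_lognormalPdf_exp_rpow μ hσ hβ₁, scoreU1, log_exp]
    ring
  have hsqrt : √(2 * π * (σ ^ 2 / (1 + β))) = √(2 * π) * σ / √(1 + β) := by
    rw [mul_div_assoc', sqrt_div' _ hβ₁.le, sqrt_mul' _ (sq_nonneg σ), sqrt_sq hσ.le]
  have hpow : (1 + β) ^ ((5 : ℝ) / 2) = (1 + β) ^ 2 * √(1 + β) := by
    rw [sqrt_eq_rpow, ← rpow_natCast, ← rpow_add hβ₁]
    norm_num
  rw [integral_Ioi_zero_eq_integral_exp_smul_comp_exp, integral_congr_ae (.of_forall hintegrand),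
    integral_const_mul, integral_sub_sq_mul_exp_neg_sub_sq_div (by positivity), hsqrt,
    Lfactor_eq β μ hσ.le, hpow]
  simp only [K]
  field_simp
  ring
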